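/- For every positive even integer n, v_2(PP_n) - v_2(TSPP_n) = 2n + ∑_{j=1}^n (s_2(2n-j) - s_2(3n+1-2j) + s_2(j-1) - s_2(3j-2)). -/

import Mathlib

def s2 (m : ℕ) : ℕ := (Nat.digits 2 m).sum

noncomputable def V (m : ℕ) : ℤ := padicValNat 2 m
noncomputable def F (m : ℕ) : ℤ := padicValNat 2 (Nat.factorial m)
noncomputable def G (N : ℕ) : ℤ := ∑ t ∈ Finset.range N, F t

lemma F_eq (m : ℕ) : F m = (m : ℤ) - s2 m := by
  have h := sub_one_mul_padicValNat_factorial (p := 2) m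
  have hle : s2 m ≤ m := Nat.digit_sum_le 2 m
  have : padicValNat 2 (Nat.factorial m) = m - s2 m := by simpa [s2] using h
  rw [F, this]
  omega

lemma F_succ (m : ℕ) : F (m + 1) = F m + V (m + 1) := by
  rw [F, F, V, Nat.factorial_succ,
    padicValNat.mul (Nat.succ_ne_zero m) (Nat.factorial_ne_zero m)]
  push_cast; ring

lemma V_odd (u : ℕ) : V (2 * u + 1) = 0 := by
  rw [V, padicValNat.eq_zero_of_not_dvd (by omega)]
  simp

lemma V_even (u : ℕ) (hu : u ≠ 0) : V (2 * u) = 1 + V u := by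
  rw [V, V, padicValNat.mul two_ne_zero hu, padicValNat.self one_lt_two]
  push_cast; ring

lemma s2_two_mul (u : ℕ) : s2 (2 * u) = s2 u := by
  rcases Nat.eq_zero_or_pos u with h | h
  · simp [h, s2]
  · rw [s2, Nat.digits_def' (by norm_num : (1:ℕ) < 2) (by omega)]
    simp [s2, Nat.mul_div_cancel_left u two_pos, Nat.mul_mod_right]

lemma s2_two_mul_add_one (u : ℕ) : s2 (2 * u + 1) = s2 u + 1 := by
  rw [s2, Nat.digits_def' (by norm_num : (1:ℕ) < 2) (by omega)]
  have h1 : (2 * u + 1) % 2 = 1 := by omega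
  have h2 : (2 * u + 1) / 2 = u := by omega
  rw [h1, h2]
  simp [s2, add_comm]

lemma F_two_mul (u : ℕ) : F (2 * u) = u + F u := by
  rw [F_eq, F_eq, s2_two_mul]; push_cast; ring

lemma F_two_mul_add_one (u : ℕ) : F (2 * u + 1) = u + F u := by
  rw [F_eq, F_eq, s2_two_mul_add_one]; push_cast; ring

lemma G_two_mul (N : ℕ) : G (2 * N) = 2 * G N + N * (N - 1) := by
  induction N with
  | zero => simp [G]
  | succ N ih =>
    have hG : G (N + 1) = G N + F N := by rw [G, Finset.sum_range_succ]; rfl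
    have h1 : G (2 * (N + 1)) = G (2 * N) + F (2 * N) + F (2 * N + 1) := by
      have h2 : 2 * (N + 1) = 2 * N + 1 + 1 := by ring
      rw [h2, G, Finset.sum_range_succ, Finset.sum_range_succ]; rfl
    rw [h1, ih, hG, F_two_mul, F_two_mul_add_one]
    push_cast; ring

lemma G_succ (t : ℕ) : G (t + 1) = G t + F t := by
  rw [G, Finset.sum_range_succ]; rfl

lemma sumV' (a c : ℕ) (h : 1 ≤ a + c) (d : ℕ) :
    ∑ j ∈ Finset.Ico a (a + d), V (j + c) = F (a + d + c - 1) - F (a + c - 1) := by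
  induction d with
  | zero => simp
  | succ d ih =>
    have h1 : a + (d + 1) = (a + d) + 1 := by ring
    rw [h1, Finset.sum_Ico_succ_top (by omega), ih]
    have e2 : a + d + c - 1 + 1 = a + d + c := by omega
    have e3 : a + d + 1 + c - 1 = (a + d + c - 1) + 1 := by omega
    rw [e3, F_succ, e2]
    ring

lemma tel (g : ℕ → ℤ) (a d : ℕ) :
    ∑ k ∈ Finset.Ico a (a + d), (g (k + 1) - g k) = g (a + d) - g a := by
  induction d with
  | zero => simp
  | succ d ih =>
    have h1 : a + (d + 1) = (a + d) + 1 := by ring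
    rw [h1, Finset.sum_Ico_succ_top (by omega), ih]
    ring

lemma sum_parity (h : ℕ → ℤ) (M : ℕ) :
    ∑ i ∈ Finset.Icc 1 (2 * M), h i = ∑ m ∈ Finset.Icc 1 M, (h (2 * m - 1) + h (2 * m)) := by
  induction M with
  | zero => simp
  | succ M ih =>
    have h1 : 2 * (M + 1) = (2 * M + 1) + 1 := by ring
    rw [h1, Finset.sum_Icc_succ_top (by omega), Finset.sum_Icc_succ_top (by omega : 1 ≤ 2*M+1),
      ih, Finset.sum_Icc_succ_top (by omega : 1 ≤ M + 1)]
    have e1 : 2 * (M + 1) - 1 = 2 * M + 1 := by omega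
    have e2 : 2 * (M + 1) = 2 * M + 1 + 1 := by omega
    rw [e1, e2]
    ring

lemma sumF (N c : ℕ) : ∑ i ∈ Finset.Icc 1 N, F (i + c) = G (N + c + 1) - G (c + 1) := by
  induction N with
  | zero => simp
  | succ N ih =>
    have h2 : G (N + 1 + c + 1) = G (N + c + 1) + F (N + 1 + c) := by
      rw [show N + 1 + c + 1 = (N + 1 + c) + 1 from by ring, G_succ,
        show N + 1 + c = N + c + 1 from by ring]
    rw [Finset.sum_Icc_succ_top (by omega), ih, h2]
    ring

lemma sumF0 (N : ℕ) : ∑ i ∈ Finset.Icc 1 N, F (i - 1) = G N := by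
  induction N with
  | zero => simp [G]
  | succ N ih =>
    rw [Finset.sum_Icc_succ_top (by omega), ih, G_succ]
    simp

lemma sumFrev (N c : ℕ) (h : N ≤ c) : ∑ j ∈ Finset.Icc 1 N, F (c - j) = G c - G (c - N) := by
  induction N with
  | zero => simp
  | succ N ih =>
    rw [Finset.sum_Icc_succ_top (by omega), ih (by omega)]
    have e1 : c - N = (c - (N + 1)) + 1 := by omega
    rw [e1, G_succ]
    ring

lemma sum_triple (M : ℕ) :
    ∑ m ∈ Finset.Icc 1 M, (F (3 * m - 3) + F (3 * m - 2) + F (3 * m - 1)) = G (3 * M) := by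
  induction M with
  | zero => simp [G]
  | succ M ih =>
    rw [Finset.sum_Icc_succ_top (by omega), ih]
    have e0 : 3 * (M + 1) - 3 = 3 * M := by omega
    have e1 : 3 * (M + 1) - 2 = (3 * M) + 1 := by omega
    have e2 : 3 * (M + 1) - 1 = (3 * M + 1) + 1 := by omega
    have e3 : 3 * (M + 1) = (3 * M + 1 + 1) + 1 := by omega
    rw [e0, e1, e2, e3, G_succ, G_succ, G_succ]
    ring

lemma sumId (N : ℕ) : 2 * ∑ i ∈ Finset.Icc 1 N, (i : ℤ) = N * (N + 1) := by
  induction N with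
  | zero => simp
  | succ N ih =>
    rw [Finset.sum_Icc_succ_top (by omega), mul_add, ih]
    push_cast
    ring

lemma val_prod {ι : Type*} (s : Finset ι) (f : ι → ℚ) (hf : ∀ i ∈ s, f i ≠ 0) :
    padicValRat 2 (∏ i ∈ s, f i) = ∑ i ∈ s, padicValRat 2 (f i) := by
  induction s using Finset.cons_induction with
  | empty => simp
  | cons a s ha ih =>
    rw [Finset.prod_cons, Finset.sum_cons,
      padicValRat.mul (hf a (Finset.mem_cons_self a s))
        (Finset.prod_ne_zero_iff.mpr fun i hi => hf i (Finset.mem_cons_of_mem hi)),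
      ih fun i hi => hf i (Finset.mem_cons_of_mem hi)]

lemma factor_ne_zero (m : ℕ) (hm : 3 ≤ m) : ((m : ℚ) - 1) / ((m : ℚ) - 2) ≠ 0 := by
  have h1 : (3 : ℚ) ≤ (m : ℚ) := by exact_mod_cast hm
  apply div_ne_zero <;> intro h <;> nlinarith

lemma factor_val (m : ℕ) (hm : 3 ≤ m) :
    padicValRat 2 (((m : ℚ) - 1) / ((m : ℚ) - 2)) = V (m - 1) - V (m - 2) := by
  have h1 : ((m : ℚ) - 1) = ((m - 1 : ℕ) : ℚ) := by
    have : (1 : ℚ) ≤ (m : ℚ) := by exact_mod_cast Nat.one_le_of_lt hm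
    push_cast [Nat.cast_sub (by omega : 1 ≤ m)]; ring
  have h2 : ((m : ℚ) - 2) = ((m - 2 : ℕ) : ℚ) := by
    push_cast [Nat.cast_sub (by omega : 2 ≤ m)]; ring
  rw [h1, h2, padicValRat.div (Nat.cast_ne_zero.mpr (by omega : (m - 1 : ℕ) ≠ 0))
      (Nat.cast_ne_zero.mpr (by omega : (m - 2 : ℕ) ≠ 0)),
    padicValRat.of_nat, padicValRat.of_nat]
  rfl

lemma val_trip (s : Finset ℕ) (t : ℕ → Finset ℕ) (u : ℕ → ℕ → Finset ℕ)
    (hs : ∀ i ∈ s, 1 ≤ i) (ht : ∀ i ∈ s, ∀ j ∈ t i, 1 ≤ j)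
    (hu : ∀ i ∈ s, ∀ j ∈ t i, ∀ k ∈ u i j, 1 ≤ k) :
    padicValRat 2 (∏ i ∈ s, ∏ j ∈ t i, ∏ k ∈ u i j,
        (((i : ℚ) + j + k - 1) / ((i : ℚ) + j + k - 2))) =
    ∑ i ∈ s, ∑ j ∈ t i, ∑ k ∈ u i j, (V (i + j + k - 1) - V (i + j + k - 2)) := by
  have key : ∀ i ∈ s, ∀ j ∈ t i, ∀ k ∈ u i j,
      (((i : ℚ) + j + k - 1) / ((i : ℚ) + j + k - 2)) =
      (((i + j + k : ℕ) : ℚ) - 1) / (((i + j + k : ℕ) : ℚ) - 2) := by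
    intro i _ j _ k _; push_cast; ring
  have h3 : ∀ i ∈ s, ∀ j ∈ t i, ∀ k ∈ u i j, 3 ≤ i + j + k := by
    intro i hi j hj k hk
    have := hs i hi; have := ht i hi j hj; have := hu i hi j hj k hk; omega
  rw [val_prod _ _ (fun i hi => Finset.prod_ne_zero_iff.mpr fun j hj =>
    Finset.prod_ne_zero_iff.mpr fun k hk => by
      rw [key i hi j hj k hk]; exact factor_ne_zero _ (h3 i hi j hj k hk))]
  refine Finset.sum_congr rfl fun i hi => ?_
  rw [val_prod _ _ (fun j hj => Finset.prod_ne_zero_iff.mpr fun k hk => by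
      rw [key i hi j hj k hk]; exact factor_ne_zero _ (h3 i hi j hj k hk))]
  refine Finset.sum_congr rfl fun j hj => ?_
  rw [val_prod _ _ (fun k hk => by
      rw [key i hi j hj k hk]; exact factor_ne_zero _ (h3 i hi j hj k hk))]
  refine Finset.sum_congr rfl fun k hk => ?_
  rw [key i hi j hj k hk, factor_val _ (h3 i hi j hj k hk)]

lemma tel2' (p c : ℕ) (hp2 : 2 ≤ p) (hc : 1 ≤ c) (d : ℕ) :
    ∑ k ∈ Finset.Ico c (c + d), (V (p + k - 1) - V (p + k - 2)) =
      V (p + c + d - 2) - V (p + c - 2) := by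
  induction d with
  | zero => simp
  | succ d ih =>
    rw [show c + (d + 1) = (c + d) + 1 from rfl, Finset.sum_Ico_succ_top (by omega), ih]
    have e1 : p + (c + d) - 1 = p + c + (d + 1) - 2 := by omega
    have e2 : p + (c + d) - 2 = p + c + d - 2 := by omega
    rw [e1, e2]
    ring

lemma tel2 (p c n : ℕ) (hp2 : 2 ≤ p) (hc : 1 ≤ c) (hcn : c ≤ n + 1) :
    ∑ k ∈ Finset.Icc c n, (V (p + k - 1) - V (p + k - 2)) =
      V (p + n - 1) - V (p + c - 2) := by
  rw [← Finset.Ico_add_one_right_eq_Icc, show n + 1 = c + (n + 1 - c) from by omega, tel2' p c hp2 hc]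
  congr 2
  omega

lemma sumVIcc (a b c : ℕ) (h : 1 ≤ a + c) (hab : a ≤ b + 1) :
    ∑ j ∈ Finset.Icc a b, V (j + c) = F (b + c) - F (a + c - 1) := by
  rw [← Finset.Ico_add_one_right_eq_Icc, show b + 1 = a + (b + 1 - a) from by omega, sumV' a c h]
  congr 2
  omega

lemma PP_val (n : ℕ) (hn : 0 < n) :
    padicValRat 2 (∏ i ∈ Finset.Icc 1 n, ∏ j ∈ Finset.Icc 1 n, ∏ k ∈ Finset.Icc 1 n,
        (((i : ℚ) + j + k - 1) / ((i : ℚ) + j + k - 2))) =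
    ∑ i ∈ Finset.Icc 1 n, (F (i + 2 * n - 1) - 2 * F (i + n - 1) + F (i - 1)) := by
  rw [val_trip _ _ _ (fun i hi => (Finset.mem_Icc.mp hi).1)
    (fun i _ j hj => (Finset.mem_Icc.mp hj).1)
    (fun i _ j _ k hk => (Finset.mem_Icc.mp hk).1)]
  refine Finset.sum_congr rfl fun i hi => ?_
  obtain ⟨hi1, hi2⟩ := Finset.mem_Icc.mp hi
  rw [Finset.sum_congr rfl (fun j hj => tel2 (i + j) 1 n
    (by have := (Finset.mem_Icc.mp hj).1; omega) le_rfl (by omega)),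
    Finset.sum_sub_distrib]
  have A : ∑ j ∈ Finset.Icc 1 n, V (i + j + n - 1) = F (i + 2 * n - 1) - F (i + n - 1) := by
    rw [Finset.sum_congr rfl (fun j hj => by
      rw [show i + j + n - 1 = j + (i + n - 1) from by omega]),
      sumVIcc 1 n (i + n - 1) (by omega) (by omega),
      show n + (i + n - 1) = i + 2 * n - 1 from by omega,
      show 1 + (i + n - 1) - 1 = i + n - 1 from by omega]
  have B : ∑ j ∈ Finset.Icc 1 n, V (i + j + 1 - 2) = F (i + n - 1) - F (i - 1) := by
    rw [Finset.sum_congr rfl (fun j hj => by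
      rw [show i + j + 1 - 2 = j + (i - 1) from by omega]),
      sumVIcc 1 n (i - 1) (by omega) (by omega),
      show n + (i - 1) = i + n - 1 from by omega,
      show 1 + (i - 1) - 1 = i - 1 from by omega]
  rw [A, B]
  ring

lemma TS_val (n : ℕ) (hn : 0 < n) :
    padicValRat 2 (∏ i ∈ Finset.Icc 1 n, ∏ j ∈ Finset.Icc i n, ∏ k ∈ Finset.Icc j n,
        (((i : ℚ) + j + k - 1) / ((i : ℚ) + j + k - 2))) =
    ∑ i ∈ Finset.Icc 1 n, ((F (i + 2 * n - 1) - F (2 * i + n - 2))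
      - ∑ j ∈ Finset.Icc i n, V (i + 2 * j - 2)) := by
  rw [val_trip _ _ _ (fun i hi => (Finset.mem_Icc.mp hi).1)
    (fun i hi j hj => le_trans (Finset.mem_Icc.mp hi).1 (Finset.mem_Icc.mp hj).1)
    (fun i hi j hj k hk => le_trans
      (le_trans (Finset.mem_Icc.mp hi).1 (Finset.mem_Icc.mp hj).1)
      (Finset.mem_Icc.mp hk).1)]
  refine Finset.sum_congr rfl fun i hi => ?_
  obtain ⟨hi1, hi2⟩ := Finset.mem_Icc.mp hi
  rw [Finset.sum_congr rfl (fun j hj => tel2 (i + j) j n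
    (by have := (Finset.mem_Icc.mp hj).1; omega)
    (by have := (Finset.mem_Icc.mp hj).1; omega)
    (by have := (Finset.mem_Icc.mp hj).2; omega)),
    Finset.sum_sub_distrib]
  have A : ∑ j ∈ Finset.Icc i n, V (i + j + n - 1) = F (i + 2 * n - 1) - F (2 * i + n - 2) := by
    rw [Finset.sum_congr rfl (fun j hj => by
      rw [show i + j + n - 1 = j + (i + n - 1) from by omega]),
      sumVIcc i n (i + n - 1) (by omega) (by omega),
      show n + (i + n - 1) = i + 2 * n - 1 from by omega,
      show i + (i + n - 1) - 1 = 2 * i + n - 2 from by omega]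
  have B : ∑ j ∈ Finset.Icc i n, V (i + j + j - 2) = ∑ j ∈ Finset.Icc i n, V (i + 2 * j - 2) :=
    Finset.sum_congr rfl fun j hj => by rw [show i + j + j - 2 = i + 2 * j - 2 from by omega]
  rw [A, B]

lemma Dsum (M : ℕ) (hM : 1 ≤ M) :
    ∑ i ∈ Finset.Icc 1 (2 * M), ∑ j ∈ Finset.Icc i (2 * M), V (i + 2 * j - 2)
      = ∑ m ∈ Finset.Icc 1 M,
        ((2 * M : ℤ) - 2 * m + 1 + F (2 * M + m - 1) - F (3 * m - 2)) := by
  rw [sum_parity (fun i => ∑ j ∈ Finset.Icc i (2 * M), V (i + 2 * j - 2)) M]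
  refine Finset.sum_congr rfl fun m hm => ?_
  obtain ⟨hm1, hm2⟩ := Finset.mem_Icc.mp hm
  have hodd : ∑ j ∈ Finset.Icc (2 * m - 1) (2 * M), V (2 * m - 1 + 2 * j - 2) = 0 := by
    apply Finset.sum_eq_zero
    intro j hj
    obtain ⟨hj1, hj2⟩ := Finset.mem_Icc.mp hj
    rw [show 2 * m - 1 + 2 * j - 2 = 2 * (m + j - 2) + 1 from by omega]
    exact V_odd _
  have heven : ∑ j ∈ Finset.Icc (2 * m) (2 * M), V (2 * m + 2 * j - 2)
      = ∑ j ∈ Finset.Icc (2 * m) (2 * M), (1 + V (j + (m - 1))) := by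
    refine Finset.sum_congr rfl fun j hj => ?_
    obtain ⟨hj1, hj2⟩ := Finset.mem_Icc.mp hj
    rw [show 2 * m + 2 * j - 2 = 2 * (m + j - 1) from by omega, V_even _ (by omega),
      show m + j - 1 = j + (m - 1) from by omega]
  rw [hodd, heven, Finset.sum_add_distrib, Finset.sum_const,
    sumVIcc (2 * m) (2 * M) (m - 1) (by omega) (by omega), Nat.card_Icc,
    show 2 * M + (m - 1) = 2 * M + m - 1 from by omega,
    show 2 * m + (m - 1) - 1 = 3 * m - 2 from by omega]
  have : ((2 * M + 1 - 2 * m : ℕ) : ℤ) = 2 * M - 2 * m + 1 := by omega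
  rw [nsmul_eq_mul, this]
  ring

lemma s2F (k : ℕ) : (s2 k : ℤ) = k - F k := by rw [F_eq]; ring

lemma sumFIcc (N c : ℕ) (hc : 1 ≤ c) :
    ∑ i ∈ Finset.Icc 1 N, F (i + c - 1) = G (N + c) - G c := by
  rw [Finset.sum_congr rfl (fun i (hi : i ∈ Finset.Icc 1 N) => by
      rw [show i + c - 1 = i + (c - 1) from by omega]),
    sumF, show N + (c - 1) + 1 = N + c from by omega, show c - 1 + 1 = c from by omega]

lemma sumIdEven (M : ℕ) : ∑ i ∈ Finset.Icc 1 (2 * M), (i : ℤ) = M * (2 * M + 1) := by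
  induction M with
  | zero => simp
  | succ M ih =>
    rw [show 2 * (M + 1) = (2 * M + 1) + 1 from by ring,
      Finset.sum_Icc_succ_top (by omega), Finset.sum_Icc_succ_top (by omega), ih]
    push_cast; ring

lemma main_calc (M : ℕ) (hM : 1 ≤ M) :
    (∑ i ∈ Finset.Icc 1 (2 * M), (F (i + 4 * M - 1) - 2 * F (i + 2 * M - 1) + F (i - 1)))
      - ((∑ i ∈ Finset.Icc 1 (2 * M), (F (i + 4 * M - 1) - F (2 * i + 2 * M - 2)))
        - ∑ m ∈ Finset.Icc 1 M,
            ((2 * M : ℤ) - 2 * m + 1 + F (2 * M + m - 1) - F (3 * m - 2)))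
      = 2 * (2 * M : ℤ) + ∑ j ∈ Finset.Icc 1 (2 * M),
          ((s2 (4 * M - j) : ℤ) - (s2 (6 * M + 1 - 2 * j) : ℤ)
            + (s2 (j - 1) : ℤ) - (s2 (3 * j - 2) : ℤ)) := by
  have hSIM := sumId M
  have key := G_two_mul (2 * M)
  rw [show 2 * (2 * M) = 4 * M from by ring] at key
  push_cast at key
  -- LHS pieces
  have h1 : ∑ i ∈ Finset.Icc 1 (2 * M), (F (i + 4 * M - 1) - 2 * F (i + 2 * M - 1) + F (i - 1))
      = (G (6 * M) - G (4 * M)) - 2 * (G (4 * M) - G (2 * M)) + G (2 * M) := by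
    rw [Finset.sum_add_distrib, Finset.sum_sub_distrib, sumF0, ← Finset.mul_sum,
      sumFIcc (2 * M) (4 * M) (by omega), sumFIcc (2 * M) (2 * M) (by omega),
      show 2 * M + 4 * M = 6 * M from by ring, show 2 * M + 2 * M = 4 * M from by ring]
  have h4 : ∑ i ∈ Finset.Icc 1 (2 * M), (F (i + 4 * M - 1) - F (2 * i + 2 * M - 2))
      = (G (6 * M) - G (4 * M))
        - (((M : ℤ) * (2 * M + 1) + 2 * M * ((M : ℤ) - 1)) + (G (3 * M) - G M)) := by
    rw [Finset.sum_congr rfl (fun i (hi : i ∈ Finset.Icc 1 (2 * M)) => by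
        obtain ⟨hi1, hi2⟩ := Finset.mem_Icc.mp hi
        rw [show 2 * i + 2 * M - 2 = 2 * (i + M - 1) from by omega, F_two_mul,
          show ((i + M - 1 : ℕ) : ℤ) = (i : ℤ) + ((M : ℤ) - 1) from by omega]),
      Finset.sum_sub_distrib, Finset.sum_add_distrib, Finset.sum_add_distrib,
      Finset.sum_const, Nat.card_Icc, sumIdEven,
      sumFIcc (2 * M) (4 * M) (by omega), sumFIcc (2 * M) M (by omega),
      show 2 * M + 4 * M = 6 * M from by ring, show 2 * M + M = 3 * M from by ring,
      show (2 * M + 1 - 1 : ℕ) = 2 * M from by omega, nsmul_eq_mul]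
    push_cast
    ring
  have h5 : ∑ m ∈ Finset.Icc 1 M,
        ((2 * M : ℤ) - 2 * m + 1 + F (2 * M + m - 1) - F (3 * m - 2))
      = ((2 * (M : ℤ) * M + M) - 2 * ∑ m ∈ Finset.Icc 1 M, (m : ℤ))
        + (G (3 * M) - G (2 * M)) - ∑ m ∈ Finset.Icc 1 M, F (3 * m - 2) := by
    rw [Finset.sum_congr rfl (fun m (hm : m ∈ Finset.Icc 1 M) => by
        rw [show 2 * M + m - 1 = m + 2 * M - 1 from by omega,
          show (2 * M : ℤ) - 2 * m + 1 + F (m + 2 * M - 1) - F (3 * m - 2)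
            = (((2 * M : ℤ) + 1) - 2 * m) + F (m + 2 * M - 1) - F (3 * m - 2) from by ring]),
      Finset.sum_sub_distrib, Finset.sum_add_distrib, Finset.sum_sub_distrib,
      Finset.sum_const, Nat.card_Icc, ← Finset.mul_sum,
      sumFIcc M (2 * M) (by omega), show M + 2 * M = 3 * M from by ring,
      show (M + 1 - 1 : ℕ) = M from by omega, nsmul_eq_mul]
    push_cast
    ring
  have hF3 : ∑ j ∈ Finset.Icc 1 (2 * M), F (3 * j - 2)
      = (6 * ∑ m ∈ Finset.Icc 1 M, (m : ℤ)) - 4 * M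
        + (G (3 * M) - ∑ m ∈ Finset.Icc 1 M, F (3 * m - 2)) := by
    have ht := sum_triple M
    rw [Finset.sum_add_distrib, Finset.sum_add_distrib] at ht
    rw [sum_parity (fun j => F (3 * j - 2)) M,
      Finset.sum_congr rfl (fun m (hm : m ∈ Finset.Icc 1 M) => by
        obtain ⟨hm1, hm2⟩ := Finset.mem_Icc.mp hm
        rw [show 3 * (2 * m - 1) - 2 = 2 * (3 * m - 3) + 1 from by omega, F_two_mul_add_one,
          show 3 * (2 * m) - 2 = 2 * (3 * m - 1) from by omega, F_two_mul,
          show ((3 * m - 3 : ℕ) : ℤ) = 3 * (m : ℤ) - 3 from by omega,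
          show ((3 * m - 1 : ℕ) : ℤ) = 3 * (m : ℤ) - 1 from by omega,
          show 3 * (m : ℤ) - 3 + F (3 * m - 3) + (3 * (m : ℤ) - 1 + F (3 * m - 1))
            = (6 * (m : ℤ) - 4) + (F (3 * m - 3) + F (3 * m - 1)) from by ring]),
      Finset.sum_add_distrib, Finset.sum_sub_distrib, ← Finset.mul_sum,
      Finset.sum_const, Nat.card_Icc, Finset.sum_add_distrib,
      show (M + 1 - 1 : ℕ) = M from by omega, nsmul_eq_mul]
    push_cast
    linarith [ht]
  have hR : ∑ j ∈ Finset.Icc 1 (2 * M),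
        ((s2 (4 * M - j) : ℤ) - (s2 (6 * M + 1 - 2 * j) : ℤ)
          + (s2 (j - 1) : ℤ) - (s2 (3 * j - 2) : ℤ))
      = (((2 * M : ℤ) * M) - 2 * ((M : ℤ) * (2 * M + 1)))
        - (G (4 * M) - G (2 * M)) + (G (3 * M) - G M) - G (2 * M)
        + ∑ j ∈ Finset.Icc 1 (2 * M), F (3 * j - 2) := by
    rw [Finset.sum_congr rfl (fun j (hj : j ∈ Finset.Icc 1 (2 * M)) => by
        obtain ⟨hj1, hj2⟩ := Finset.mem_Icc.mp hj
        rw [s2F (4 * M - j), s2F (6 * M + 1 - 2 * j), s2F (j - 1), s2F (3 * j - 2),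
          show ((4 * M - j : ℕ) : ℤ) = 4 * (M : ℤ) - j from by omega,
          show ((6 * M + 1 - 2 * j : ℕ) : ℤ) = 6 * (M : ℤ) + 1 - 2 * j from by omega,
          show ((j - 1 : ℕ) : ℤ) = (j : ℤ) - 1 from by omega,
          show ((3 * j - 2 : ℕ) : ℤ) = 3 * (j : ℤ) - 2 from by omega,
          show 6 * M + 1 - 2 * j = 2 * (3 * M - j) + 1 from by omega, F_two_mul_add_one,
          show ((3 * M - j : ℕ) : ℤ) = 3 * (M : ℤ) - j from by omega,
          show 4 * (M : ℤ) - j - F (4 * M - j)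
              - (6 * (M : ℤ) + 1 - 2 * j - (3 * (M : ℤ) - j + F (3 * M - j)))
              + ((j : ℤ) - 1 - F (j - 1)) - (3 * (j : ℤ) - 2 - F (3 * j - 2))
            = (((M : ℤ) - 2 * j) - F (4 * M - j) + F (3 * M - j) - F (j - 1)) + F (3 * j - 2)
            from by ring]),
      Finset.sum_add_distrib, Finset.sum_sub_distrib, Finset.sum_add_distrib,
      Finset.sum_sub_distrib, Finset.sum_sub_distrib, ← Finset.mul_sum,
      Finset.sum_const, Nat.card_Icc, sumIdEven, sumF0,
      sumFrev (2 * M) (4 * M) (by omega), sumFrev (2 * M) (3 * M) (by omega),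
      show (4 * M - 2 * M : ℕ) = 2 * M from by omega,
      show (3 * M - 2 * M : ℕ) = M from by omega,
      show (2 * M + 1 - 1 : ℕ) = 2 * M from by omega, nsmul_eq_mul]
    push_cast
    ring
  rw [h1, h4, h5, hR, hF3]
  push_cast
  linear_combination -key - 4 * hSIM

theorem v2_diff_even (n : ℕ) (hn : 0 < n) (hev : Even n) :
    padicValRat 2 (∏ i ∈ Finset.Icc 1 n, ∏ j ∈ Finset.Icc 1 n, ∏ k ∈ Finset.Icc 1 n,
        (((i : ℚ) + j + k - 1) / ((i : ℚ) + j + k - 2))) -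
      padicValRat 2 (∏ i ∈ Finset.Icc 1 n, ∏ j ∈ Finset.Icc i n, ∏ k ∈ Finset.Icc j n,
        (((i : ℚ) + j + k - 1) / ((i : ℚ) + j + k - 2))) =
      2 * n + ∑ j ∈ Finset.Icc 1 n,
        ((s2 (2 * n - j) : ℤ) - (s2 (3 * n + 1 - 2 * j) : ℤ)
          + (s2 (j - 1) : ℤ) - (s2 (3 * j - 2) : ℤ)) := by
  obtain ⟨M, rfl⟩ := hev
  have hM : 1 ≤ M := by omega
  simp only [show M + M = 2 * M from (two_mul M).symm]
  rw [PP_val (2 * M) (by omega), TS_val (2 * M) (by omega), Finset.sum_sub_distrib,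
    Dsum M hM]
  simp only [show 2 * (2 * M) = 4 * M from by ring, show 3 * (2 * M) = 6 * M from by ring]
  have h := main_calc M hM
  push_cast at h ⊢
  linear_combination h
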